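/- arXiv:2210.08575 — 4 statements merged into one kernel-verified Lean document; each statement's English description precedes it below -/
import Mathlib

section
/- Let S be lower unitriangular with expansion S = I + Λᵀ S^{[1]} + (Λᵀ)² S^{[2]} + ⋯ and inverse S^{-1} = I + Λᵀ S^{[-1]} + (Λᵀ)² S^{[-2]} + (Λᵀ)³ S^{[-3]} + ⋯. Then S^{[-3]} = −S^{[3]} + (T₋S^{[2]}) S^{[1]} + (T₋² S^{[1]}) S^{[2]} − (T₋² S^{[1]})(T₋ S^{[1]}) S^{[1]}. -/
/-! Row `n + d` of `S * T = 1`, read below the diagonal, expresses `T (n + d) n` through the entries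
`T (n + i) n` with `i < d`; unrolling this recursion for `d = 1, 2, 3` gives the formula. -/

open Finset

theorem lowerUnitriangular_inv_entry_eq_neg_sum {R : Type*} [Ring R] {S T : ℕ → ℕ → R}
    {n d : ℕ} (hS : S (n + d) (n + d) = 1)
    (hrow : ∑ k ∈ Icc n (n + d), S (n + d) k * T k n = 0) :
    T (n + d) n = -∑ i ∈ range d, S (n + d) (n + i) * T (n + i) n := by
  rw [← Ico_add_one_right_eq_Icc, sum_Ico_succ_top (by omega), hS, one_mul,
    sum_Ico_eq_sum_range, Nat.add_sub_cancel_left] at hrow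
  exact eq_neg_of_add_eq_zero_right hrow

theorem inverse_unitriangular_third_subdiagonal_general (S T : ℕ → ℕ → ℂ)
    (hSdiag : ∀ n, S n n = 1)
    (hTdiag : ∀ n, T n n = 1)
    (hinv : ∀ n m : ℕ, m ≤ n →
      (∑ k ∈ Finset.Icc m n, S n k * T k m) = if n = m then 1 else 0) :
    ∀ n : ℕ,
      T (n + 3) n
        = -S (n + 3) n + S (n + 3) (n + 1) * S (n + 1) n
          + S (n + 3) (n + 2) * S (n + 2) n
          - S (n + 3) (n + 2) * S (n + 2) (n + 1) * S (n + 1) n := by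
  intro n
  have recursion (d : ℕ) (hd : d ≠ 0) :=
    lowerUnitriangular_inv_entry_eq_neg_sum (hSdiag (n + d))
      (by simpa [hd] using hinv (n + d) n (by omega))
  have h1 := recursion 1 one_ne_zero
  have h2 := recursion 2 two_ne_zero
  have h3 := recursion 3 three_ne_zero
  simp only [sum_range_succ, sum_range_zero, zero_add, add_zero, hTdiag, mul_one] at h1 h2 h3
  rw [h3, h2, h1]
  ring

/-- For a lower unitriangular semi-infinite matrix S with inverse S⁻¹, the third
subdiagonal of the inverse satisfies
S^{[-3]} = −S^{[3]} + (T₋S^{[2]})S^{[1]} + (T₋²S^{[1]})S^{[2]}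
           − (T₋²S^{[1]})(T₋S^{[1]})S^{[1]}. -/
theorem inverse_unitriangular_third_subdiagonal (S T : ℕ → ℕ → ℂ)
    (hSdiag : ∀ n, S n n = 1) (hSlow : ∀ n m, n < m → S n m = 0)
    (hTdiag : ∀ n, T n n = 1) (hTlow : ∀ n m, n < m → T n m = 0)
    (hinv : ∀ n m : ℕ, m ≤ n →
      (∑ k ∈ Finset.Icc m n, S n k * T k m) = if n = m then 1 else 0) :
    ∀ n : ℕ,
      T (n + 3) n
        = -S (n + 3) n + S (n + 3) (n + 1) * S (n + 1) n
          + S (n + 3) (n + 2) * S (n + 2) n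
          - S (n + 3) (n + 2) * S (n + 2) (n + 1) * S (n + 1) n :=
  inverse_unitriangular_third_subdiagonal_general S T hSdiag hTdiag hinv
end

section
/- Let B be the lower Pascal matrix, S a lower unitriangular semi-infinite matrix, and Π = S B S^{-1}, Π^{-1} = S B^{-1} S^{-1} the dressed Pascal matrices with expansions Π^{±1} = I + Λᵀ π^{[±1]} + (Λᵀ)² π^{[±2]} + ⋯ (π^{[±k]} diagonal). Then π^{[1]} + π^{[-1]} = 0 and π^{[2]} + π^{[-2]} = 2 D^{[2]}, where D^{[2]}_n = (n+2)(n+1)/2. -/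
/-! Adding the two dressings gives `S (B + B⁻¹) S⁻¹`, and `B + B⁻¹` has entries
`(1 + (-1)^(k+j)) C(k,j)`: it is `2I` plus a part supported on the even subdiagonals
`k - j = 2, 4, …`. The `2I` part contributes `2 (S S⁻¹)_{nm} = 0` off the diagonal, so on the
first subdiagonal nothing survives, and on the second only the entry `2 C(m+2,m)` at `(m+2, m)`,
which `S` and `S⁻¹` leave unchanged because they are unitriangular. -/

open Finset

section
variable {R : Type*} [CommRing R]

theorem sum_Icc_sum_Icc_eq_diag_add_sum_Ico (f : ℕ → ℕ → R) (m n : ℕ) :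
    ∑ k ∈ Icc m n, ∑ j ∈ Icc m k, f k j =
      ∑ k ∈ Icc m n, f k k + ∑ k ∈ Icc m n, ∑ j ∈ Ico m k, f k j := by
  rw [← sum_add_distrib]
  refine sum_congr rfl fun k hk => ?_
  rw [← Ico_insert_right (mem_Icc.1 hk).1, sum_insert right_notMem_Ico]

theorem sum_Icc_sum_Ico_add_one (f : ℕ → ℕ → R) (m : ℕ) :
    ∑ k ∈ Icc m (m + 1), ∑ j ∈ Ico m k, f k j = f (m + 1) m := by
  simp [sum_Icc_succ_top]

theorem sum_Icc_sum_Ico_add_two (f : ℕ → ℕ → R) (m : ℕ) :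
    ∑ k ∈ Icc m (m + 2), ∑ j ∈ Ico m k, f k j =
      f (m + 1) m + f (m + 2) m + f (m + 2) (m + 1) := by
  simp [sum_Icc_succ_top, sum_Ico_succ_top, add_assoc]

theorem sum_dressed_pascal_add_sum_dressed_pascal_inv (S T : ℕ → ℕ → R) (m n : ℕ) :
    (∑ k ∈ Icc m n, ∑ j ∈ Icc m k, S n k * (k.choose j : R) * T j m) +
        ∑ k ∈ Icc m n, ∑ j ∈ Icc m k,
          S n k * ((-1 : R) ^ (k + j) * (k.choose j : R)) * T j m =
      2 * ∑ k ∈ Icc m n, S n k * T k m +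
        ∑ k ∈ Icc m n, ∑ j ∈ Ico m k,
          S n k * ((1 + (-1 : R) ^ (k + j)) * (k.choose j : R)) * T j m := by
  simp_rw [← sum_add_distrib, ← add_mul, ← mul_add, ← one_add_mul]
  rw [sum_Icc_sum_Icc_eq_diag_add_sum_Ico, mul_sum]
  congr 1
  refine sum_congr rfl fun k _ => ?_
  rw [Even.neg_one_pow ⟨k, rfl⟩, Nat.choose_self]
  ring

theorem Nat.cast_choose_add_two_self_mul_two (n : ℕ) :
    ((n + 2).choose n : R) * 2 = (n + 2) * (n + 1) := by
  have h : (n + 2) * (n + 1) = (n + 2).choose 2 * 2 := by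
    simpa using Nat.add_one_mul_choose_eq (n + 1) 1
  rw [Nat.choose_symm_add]
  simpa using congrArg (Nat.cast : ℕ → R) h.symm

end

theorem dressed_pascal_subdiagonal_sums_general (S T : ℕ → ℕ → ℂ)
    (hSdiag : ∀ n, S n n = 1)
    (hTdiag : ∀ n, T n n = 1)
    (hinv : ∀ n m : ℕ, m ≤ n →
      (∑ k ∈ Finset.Icc m n, S n k * T k m) = if n = m then 1 else 0)
    (Pi Pi' : ℕ → ℕ → ℂ)
    (hPi : ∀ n m : ℕ, Pi n m =
      ∑ k ∈ Finset.Icc m n, ∑ j ∈ Finset.Icc m k, S n k * (k.choose j : ℂ) * T j m)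
    (hPi' : ∀ n m : ℕ, Pi' n m =
      ∑ k ∈ Finset.Icc m n, ∑ j ∈ Finset.Icc m k,
        S n k * ((-1 : ℂ) ^ (k + j) * (k.choose j : ℂ)) * T j m) :
    ∀ n : ℕ,
      Pi (n + 1) n + Pi' (n + 1) n = 0 ∧
      Pi (n + 2) n + Pi' (n + 2) n = (n + 2) * (n + 1) := by
  intro n
  have hodd : ∀ k, Odd (k + 1 + k) := fun k => ⟨k, by ring⟩
  refine ⟨?_, ?_⟩
  · rw [hPi, hPi', sum_dressed_pascal_add_sum_dressed_pascal_inv, sum_Icc_sum_Ico_add_one,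
      hinv _ _ (by omega), if_neg (by omega), (hodd n).neg_one_pow]
    ring
  · rw [hPi, hPi', sum_dressed_pascal_add_sum_dressed_pascal_inv, sum_Icc_sum_Ico_add_two,
      hinv _ _ (by omega), if_neg (by omega), (hodd n).neg_one_pow, (hodd (n + 1)).neg_one_pow,
      Even.neg_one_pow ⟨n + 1, by ring⟩, hSdiag, hTdiag,
      ← Nat.cast_choose_add_two_self_mul_two]
    ring

/-- For the dressed Pascal matrices Pi = S B S⁻¹ and Pi⁻¹ = S B⁻¹ S⁻¹ (S lower
unitriangular, B the Pascal matrix), the subdiagonals satisfy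
π^{[1]} + π^{[-1]} = 0 and π^{[2]} + π^{[-2]} = 2D^{[2]}, with
D^{[2]}_n = (n+2)(n+1)/2. -/
theorem dressed_pascal_subdiagonal_sums (S T : ℕ → ℕ → ℂ)
    (hSdiag : ∀ n, S n n = 1) (hSlow : ∀ n m, n < m → S n m = 0)
    (hTdiag : ∀ n, T n n = 1) (hTlow : ∀ n m, n < m → T n m = 0)
    (hinv : ∀ n m : ℕ, m ≤ n →
      (∑ k ∈ Finset.Icc m n, S n k * T k m) = if n = m then 1 else 0)
    (Pi Pi' : ℕ → ℕ → ℂ)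
    (hPi : ∀ n m : ℕ, Pi n m =
      ∑ k ∈ Finset.Icc m n, ∑ j ∈ Finset.Icc m k, S n k * (k.choose j : ℂ) * T j m)
    (hPi' : ∀ n m : ℕ, Pi' n m =
      ∑ k ∈ Finset.Icc m n, ∑ j ∈ Finset.Icc m k,
        S n k * ((-1 : ℂ) ^ (k + j) * (k.choose j : ℂ)) * T j m) :
    ∀ n : ℕ,
      Pi (n + 1) n + Pi' (n + 1) n = 0 ∧
      Pi (n + 2) n + Pi' (n + 2) n = (n + 2) * (n + 1) :=
  dressed_pascal_subdiagonal_sums_general S T hSdiag hTdiag hinv Pi Pi' hPi hPi'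
end

section
/- With Π = SBS^{-1} as above and P(z) = Sχ(z) the monic polynomial sequence determined by S (so P_n(z) = z^n + p¹_n z^{n-1} + ⋯), the first subdiagonal of Π satisfies π^{[1]}_n = n+1 and the second subdiagonal satisfies π^{[2]}_n = (n+2)(n+1)/2 + p¹_{n+2}(n+1) − (n+2) p¹_{n+1} for all n ≥ 0. -/
/-!
Reading off the entries of `Π = S B T`, `T = S⁻¹`, near the diagonal involves only the unit
diagonals of `S`, `B` and `T`, the binomials `(n+1).choose n = n+1`, `(n+2).choose n`, and the
first two subdiagonals of `T`; the latter are obtained from `S T = 1` by forward substitution: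
`T (n+1) n = -S (n+1) n` and `T (n+2) n = -S (n+2) n + S (n+2) (n+1) * S (n+1) n`.
-/

open Finset

lemma Finset.sum_Icc_self_add_one {M : Type*} [AddCommMonoid M] (f : ℕ → M) (m : ℕ) :
    ∑ k ∈ Icc m (m + 1), f k = f m + f (m + 1) := by
  rw [sum_Icc_succ_top (by omega), Icc_self, sum_singleton]

lemma Finset.sum_Icc_self_add_two {M : Type*} [AddCommMonoid M] (f : ℕ → M) (m : ℕ) :
    ∑ k ∈ Icc m (m + 2), f k = f m + f (m + 1) + f (m + 2) := by
  rw [sum_Icc_succ_top (by omega), sum_Icc_self_add_one]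

/-- `S B T` for the lower Pascal matrix `B`; the sums run only where all factors can be nonzero
when `S`, `T` are lower triangular. -/
def dressedPascal {R : Type*} [CommRing R] (S T : ℕ → ℕ → R) (n m : ℕ) : R :=
  ∑ k ∈ Icc m n, ∑ j ∈ Icc m k, S n k * (k.choose j : R) * T j m

section UnitriangularInverse

variable {R : Type*} [CommRing R] {S T : ℕ → ℕ → R}
  (hSdiag : ∀ n, S n n = 1) (hTdiag : ∀ n, T n n = 1)
  (hinv : ∀ n m : ℕ, m ≤ n → (∑ k ∈ Icc m n, S n k * T k m) = if n = m then 1 else 0)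
include hSdiag hTdiag hinv

lemma inv_entry_succ (n : ℕ) : T (n + 1) n = -S (n + 1) n := by
  have h := hinv (n + 1) n (by omega)
  rw [sum_Icc_self_add_one, hSdiag, hTdiag, if_neg (by omega)] at h
  linear_combination h

lemma inv_entry_add_two (n : ℕ) :
    T (n + 2) n = -S (n + 2) n + S (n + 2) (n + 1) * S (n + 1) n := by
  have h := hinv (n + 2) n (by omega)
  rw [sum_Icc_self_add_two, hSdiag, hTdiag, inv_entry_succ hSdiag hTdiag hinv,
    if_neg (by omega)] at h
  linear_combination h

lemma dressedPascal_succ_self (n : ℕ) : dressedPascal S T (n + 1) n = n + 1 := by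
  simp only [dressedPascal, sum_Icc_self_add_one, Icc_self, sum_singleton, hSdiag, hTdiag,
    inv_entry_succ hSdiag hTdiag hinv, Nat.choose_self, Nat.choose_succ_self_right]
  push_cast
  ring

lemma dressedPascal_add_two_self (n : ℕ) :
    dressedPascal S T (n + 2) n =
      ((n + 2).choose 2 : R) + S (n + 2) (n + 1) * (n + 1) - (n + 2) * S (n + 1) n := by
  simp only [dressedPascal, sum_Icc_self_add_two, sum_Icc_self_add_one, Icc_self,
    sum_singleton, hSdiag, hTdiag, inv_entry_succ hSdiag hTdiag hinv,
    inv_entry_add_two hSdiag hTdiag hinv, Nat.choose_self, Nat.choose_succ_self_right]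
  rw [Nat.choose_symm_add]
  push_cast
  ring

end UnitriangularInverse

theorem dressed_pascal_entries_general (S T : ℕ → ℕ → ℂ)
    (hSdiag : ∀ n, S n n = 1)
    (hTdiag : ∀ n, T n n = 1)
    (hinv : ∀ n m : ℕ, m ≤ n →
      (∑ k ∈ Finset.Icc m n, S n k * T k m) = if n = m then 1 else 0)
    (Pi : ℕ → ℕ → ℂ)
    (hPi : ∀ n m : ℕ, Pi n m =
      ∑ k ∈ Finset.Icc m n, ∑ j ∈ Finset.Icc m k, S n k * (k.choose j : ℂ) * T j m)
    (p1 : ℕ → ℂ)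
    (hp1 : ∀ n : ℕ, p1 n = if n = 0 then 0 else S n (n - 1)) :
    ∀ n : ℕ,
      Pi (n + 1) n = (n : ℂ) + 1 ∧
      Pi (n + 2) n = ((n : ℂ) + 2) * ((n : ℂ) + 1) / 2
        + p1 (n + 2) * ((n : ℂ) + 1) - ((n : ℂ) + 2) * p1 (n + 1) := by
  intro n
  refine ⟨by rw [hPi]; exact dressedPascal_succ_self hSdiag hTdiag hinv n, ?_⟩
  rw [hPi, ← dressedPascal, dressedPascal_add_two_self hSdiag hTdiag hinv, Nat.cast_choose_two,
    hp1, hp1, if_neg (by omega), if_neg (by omega)]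
  push_cast
  ring

/-- For the dressed Pascal matrix Pi = S B S⁻¹, with P(z) = Sχ(z) the monic
polynomial sequence (so p¹_n = S_{n,n-1}), the subdiagonals satisfy
π^{[1]}_n = n+1 and π^{[2]}_n = (n+2)(n+1)/2 + (n+1)p¹_{n+2} − (n+2)p¹_{n+1}. -/
theorem dressed_pascal_entries (S T : ℕ → ℕ → ℂ)
    (hSdiag : ∀ n, S n n = 1) (hSlow : ∀ n m, n < m → S n m = 0)
    (hTdiag : ∀ n, T n n = 1) (hTlow : ∀ n m, n < m → T n m = 0)
    (hinv : ∀ n m : ℕ, m ≤ n →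
      (∑ k ∈ Finset.Icc m n, S n k * T k m) = if n = m then 1 else 0)
    (Pi : ℕ → ℕ → ℂ)
    (hPi : ∀ n m : ℕ, Pi n m =
      ∑ k ∈ Finset.Icc m n, ∑ j ∈ Finset.Icc m k, S n k * (k.choose j : ℂ) * T j m)
    (p1 : ℕ → ℂ)
    (hp1 : ∀ n : ℕ, p1 n = if n = 0 then 0 else S n (n - 1)) :
    ∀ n : ℕ,
      Pi (n + 1) n = (n : ℂ) + 1 ∧
      Pi (n + 2) n = ((n : ℂ) + 2) * ((n : ℂ) + 1) / 2
        + p1 (n + 2) * ((n : ℂ) + 1) - ((n : ℂ) + 2) * p1 (n + 1) :=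
  dressed_pascal_entries_general S T hSdiag hTdiag hinv Pi hPi p1 hp1
end

section
/- Let w: ℕ → (0,∞) satisfy the Pearson equation θ(k+1) w(k+1) = η κ(k) w(k) for all k ∈ ℕ, where θ, κ are polynomials independent of η and η > 0, and suppose the moments ρ_n(η) = Σ_k k^n w(k) all converge and depend smoothly on η with all Hankel determinants nonzero. Then the monic orthogonal polynomials satisfy ϑ_η P_n(z) = −γ_n P_{n-1}(z) for n ≥ 1; in particular the subleading coefficients satisfy ϑ_η p¹_n = −γ_n. -/
open Polynomial Filter Topology

/-!
Write `L_η` for the moment functional of the weight `v k * η ^ k`; since `ϑ_η η ^ k = k η ^ k`,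
`ϑ_η` acts on its moments as the shift `ρ_i ↦ ρ_{i+1}`. Differentiating the orthogonality
relations `L_η (X ^ m * P_n) = 0`, `m < n`, therefore gives
`L_η (X ^ m * ϑ_η P_n) = -L_η (X ^ (m + 1) * P_n)`, which vanishes for `m < n - 1` and equals
`-γ_n L_η (X ^ (n - 1) * P_{n-1})` for `m = n - 1` by the three-term recurrence. As `P_n` is
monic, `ϑ_η P_n + γ_n P_{n-1}` has degree `< n`, so it is orthogonal to itself, and positivity
of `L_η` forces it to vanish.
-/

section LinearFunctional

variable {R : Type*} [CommRing R]

/-- The linear functional on `R[X]` sending `X ^ i` to `μ i`. -/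
noncomputable def momentFunctional (μ : ℕ → R) : R[X] →ₗ[R] R :=
  lsum fun i => LinearMap.smulRight LinearMap.id (μ i)

@[simp]
theorem momentFunctional_monomial (μ : ℕ → R) (n : ℕ) (a : R) :
    momentFunctional μ (monomial n a) = a * μ n := by
  rw [momentFunctional, lsum_apply, sum_monomial_index _ _ (by simp)]
  simp

theorem momentFunctional_eq_sum_range (μ : ℕ → R) {p : R[X]} {N : ℕ} (hp : p.natDegree < N) :
    momentFunctional μ p = ∑ i ∈ Finset.range N, p.coeff i * μ i := by
  rw [momentFunctional, lsum_apply, sum_over_range' p (fun _ => by simp) N hp]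
  simp

theorem momentFunctional_X_pow_mul (μ : ℕ → R) (m : ℕ) (p : R[X]) :
    momentFunctional μ (X ^ m * p) = momentFunctional (fun i => μ (i + m)) p := by
  induction p using Polynomial.induction_on' with
  | add p q hp hq => rw [mul_add, map_add, map_add, hp, hq]
  | monomial n a => rw [X_pow_mul_monomial, momentFunctional_monomial, momentFunctional_monomial]

theorem momentFunctional_smul (c : R) (μ : ℕ → R) (p : R[X]) :
    momentFunctional (c • μ) p = c * momentFunctional μ p := by
  induction p using Polynomial.induction_on' with
  | add p q hp hq => rw [map_add, map_add, hp, hq, mul_add]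
  | monomial n a =>
    rw [momentFunctional_monomial, momentFunctional_monomial, Pi.smul_apply, smul_eq_mul]
    ring

variable (L : R[X] →ₗ[R] R)

theorem eq_zero_of_map_X_pow_mul_eq_zero (hL : ∀ r ≠ 0, L (r * r) ≠ 0) {r : R[X]} {n : ℕ}
    (hr : r.natDegree < n) (horth : ∀ j < n, L (X ^ j * r) = 0) : r = 0 := by
  by_contra hr0
  refine hL r hr0 ?_
  rw (occs := .pos [1]) [as_sum_range' r n hr]
  simp only [Finset.sum_mul, map_sum, ← C_mul_X_pow_eq_monomial, C_mul', smul_mul_assoc, map_smul,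
    smul_eq_mul]
  exact Finset.sum_eq_zero fun j hj => by rw [horth j (Finset.mem_range.mp hj), mul_zero]

theorem map_X_pow_succ_mul_of_recurrence {p q r : R[X]} {β γ : R} {n : ℕ}
    (hrec : X * q = p + C β * q + C γ * r) (hp : L (X ^ n * p) = 0) (hq : L (X ^ n * q) = 0) :
    L (X ^ (n + 1) * q) = γ * L (X ^ n * r) := by
  rw [pow_succ, mul_assoc, hrec]
  simp only [mul_add, C_mul', mul_smul_comm, map_add, map_smul, hp, hq, smul_eq_mul]
  ring

end LinearFunctional

section Moments

noncomputable def moment (w : ℕ → ℝ) (n : ℕ) : ℝ := ∑' k : ℕ, (k : ℝ) ^ n * w k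

variable {w : ℕ → ℝ} (hw : ∀ n, Summable fun k : ℕ => (k : ℝ) ^ n * w k)
include hw

theorem summable_eval_mul (q : ℝ[X]) : Summable fun k : ℕ => q.eval (k : ℝ) * w k := by
  induction q using Polynomial.induction_on' with
  | add p q hp hq => simpa only [eval_add, add_mul] using hp.add hq
  | monomial n a => simpa only [eval_monomial, mul_assoc] using (hw n).mul_left a

theorem tsum_eval_mul (q : ℝ[X]) :
    ∑' k : ℕ, q.eval (k : ℝ) * w k = momentFunctional (moment w) q := by
  induction q using Polynomial.induction_on' with
  | add p q hp hq =>
    simp only [eval_add, add_mul, map_add,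
      (summable_eval_mul hw p).tsum_add (summable_eval_mul hw q), hp, hq]
  | monomial n a =>
    simp only [eval_monomial, mul_assoc, tsum_mul_left, momentFunctional_monomial, moment]


theorem momentFunctional_moment_mul_self_pos (hpos : ∀ k, 0 < w k) {r : ℝ[X]} (hr : r ≠ 0) :
    0 < momentFunctional (moment w) (r * r) := by
  obtain ⟨k₀, hk₀⟩ : ∃ k : ℕ, r.eval (k : ℝ) ≠ 0 := by
    by_contra! h
    exact hr (eq_zero_of_infinite_isRoot r
      ((Set.infinite_range_of_injective Nat.cast_injective).mono (Set.range_subset_iff.mpr h)))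
  rw [← tsum_eval_mul hw]
  refine (summable_eval_mul hw _).tsum_pos (fun k => ?_) k₀ ?_
  · rw [eval_mul]
    exact mul_nonneg (mul_self_nonneg _) (hpos k).le
  · rw [eval_mul]
    exact mul_pos (mul_self_pos.mpr hk₀) (hpos k₀)

end Moments

theorem hasDerivAt_moment_mul_pow {v : ℕ → ℝ} (hv : ∀ k, 0 ≤ v k) {b η : ℝ}
    (hb : ∀ n, Summable fun k : ℕ => (k : ℝ) ^ n * (v k * b ^ k)) (hη : η ∈ Set.Ioo 0 b) (j : ℕ) :
    HasDerivAt (fun x => moment (fun k => v k * x ^ k) j)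
      (moment (fun k => v k * η ^ k) (j + 1) / η) η := by
  have hη0 : 0 < η := hη.1
  have hsum_η : Summable fun k : ℕ => (k : ℝ) ^ j * (v k * η ^ k) :=
    (hb j).of_nonneg_of_le (fun k => by have := hv k; positivity) fun k => by
      gcongr
      · exact hv k
      · exact hη.2.le
  have hdom : ∀ (k : ℕ), ∀ x ∈ Set.Ioo 0 b, ‖(k : ℝ) ^ j * (v k * ((k : ℝ) * x ^ (k - 1)))‖
      ≤ (k : ℝ) ^ (j + 1) * (v k * b ^ k) / b := by
    rintro (_ | k) x ⟨hx0, hxb⟩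
    · simp
    rw [Real.norm_of_nonneg (by have := hv (k + 1); positivity), le_div_iff₀ (hx0.trans hxb)]
    calc ((k + 1 : ℕ) : ℝ) ^ j * (v (k + 1) * ((k + 1 : ℕ) * x ^ k)) * b
        ≤ ((k + 1 : ℕ) : ℝ) ^ j * (v (k + 1) * ((k + 1 : ℕ) * b ^ k)) * b := by
          have := hv (k + 1)
          have := (hx0.trans hxb).le
          gcongr
      _ = _ := by ring
  refine (hasDerivAt_tsum_of_isPreconnected ((hb (j + 1)).div_const b) isOpen_Ioo
    isPreconnected_Ioo (fun k x _ => ((hasDerivAt_pow k x).const_mul (v k)).const_mul _)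
    hdom hη hsum_η hη).congr_deriv ?_
  rw [moment, ← tsum_div_const]
  refine tsum_congr fun k => ?_
  rcases k with _ | k
  · simp
  · field_simp
    simp only [Nat.add_sub_cancel]
    ring

section Derivative

variable {p : ℝ → ℝ[X]} {D : ℝ[X]} {η : ℝ} {N : ℕ}

theorem exists_hasDerivAt_coeff (hp : ∀ i, DifferentiableAt ℝ (fun x => (p x).coeff i) η)
    (hN : ∀ᶠ x in 𝓝 η, (p x).natDegree ≤ N) :
    ∃ D : ℝ[X], ∀ i, HasDerivAt (fun x => (p x).coeff i) (D.coeff i) η := by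
  refine ⟨∑ i ∈ Finset.range (N + 1), monomial i (deriv (fun x => (p x).coeff i) η), fun i => ?_⟩
  simp only [finsetSum_coeff, coeff_monomial, Finset.sum_ite_eq', Finset.mem_range]
  split_ifs with hi
  · exact (hp i).hasDerivAt
  · refine (hasDerivAt_const η 0).congr_of_eventuallyEq (hN.mono fun x hx => ?_)
    exact coeff_eq_zero_of_natDegree_lt (by omega)

theorem natDegree_le_of_hasDerivAt_coeff
    (hp : ∀ i, HasDerivAt (fun x => (p x).coeff i) (D.coeff i) η)
    (hN : ∀ᶠ x in 𝓝 η, (p x).natDegree ≤ N) : D.natDegree ≤ N := by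
  refine natDegree_le_iff_coeff_eq_zero.mpr fun i hi => (hp i).unique ?_
  exact (hasDerivAt_const η 0).congr_of_eventuallyEq
    (hN.mono fun x hx => coeff_eq_zero_of_natDegree_lt (hx.trans_lt hi))

theorem natDegree_le_of_hasDerivAt_coeff_of_monic
    (hp : ∀ i, HasDerivAt (fun x => (p x).coeff i) (D.coeff i) η)
    (hmonic : ∀ᶠ x in 𝓝 η, (p x).Monic ∧ (p x).natDegree = N + 1) : D.natDegree ≤ N := by
  refine natDegree_le_iff_coeff_eq_zero.mpr fun i hi => (hp i).unique ?_
  refine (hasDerivAt_const η (if i = N + 1 then 1 else 0)).congr_of_eventuallyEq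
    (hmonic.mono fun x ⟨hm, hdeg⟩ => ?_)
  show (p x).coeff i = if i = N + 1 then 1 else 0
  rcases (show N + 1 ≤ i from hi).eq_or_lt with rfl | hi
  · rw [if_pos rfl, ← hdeg, hm.coeff_natDegree]
  · rw [if_neg hi.ne', coeff_eq_zero_of_natDegree_lt (hdeg ▸ hi)]

theorem HasDerivAt.momentFunctional {μ : ℝ → ℕ → ℝ} {μ' : ℕ → ℝ}
    (hμ : ∀ i, HasDerivAt (fun x => μ x i) (μ' i) η)
    (hp : ∀ i, HasDerivAt (fun x => (p x).coeff i) (D.coeff i) η)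
    (hN : ∀ᶠ x in 𝓝 η, (p x).natDegree ≤ N) :
    HasDerivAt (fun x => momentFunctional (μ x) (p x))
      (momentFunctional μ' (p η) + momentFunctional (μ η) D) η := by
  have hD := natDegree_le_of_hasDerivAt_coeff hp hN
  rw [momentFunctional_eq_sum_range _ (Nat.lt_succ_of_le hN.self_of_nhds),
    momentFunctional_eq_sum_range _ (Nat.lt_succ_of_le hD), ← Finset.sum_add_distrib]
  refine (HasDerivAt.fun_sum fun i _ => (hp i).mul (hμ i)).congr_of_eventuallyEq ?_
    |>.congr_deriv (Finset.sum_congr rfl fun i _ => by ring)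
  exact hN.mono fun x hx => momentFunctional_eq_sum_range _ (Nat.lt_succ_of_le hx)

theorem momentFunctional_X_pow_mul_C_mul_eq_neg {μ : ℝ → ℕ → ℝ} {μ' : ℕ → ℝ} {m : ℕ}
    (hμ : ∀ i, HasDerivAt (fun x => μ x i) (μ' i) η) (hθ : ∀ i, η * μ' i = μ η (i + 1))
    (hp : ∀ i, HasDerivAt (fun x => (p x).coeff i) (D.coeff i) η)
    (hN : ∀ᶠ x in 𝓝 η, (p x).natDegree ≤ N)
    (horth : ∀ᶠ x in 𝓝 η, momentFunctional (μ x) (X ^ m * p x) = 0) :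
    momentFunctional (μ η) (X ^ m * (C η * D)) = -momentFunctional (μ η) (X ^ (m + 1) * p η) := by
  simp only [momentFunctional_X_pow_mul] at horth ⊢
  have h := (HasDerivAt.momentFunctional (fun i => hμ (i + m)) hp hN).unique
    ((hasDerivAt_const η 0).congr_of_eventuallyEq horth)
  have hshift : (fun i => μ η (i + (m + 1))) = η • fun i => μ' (i + m) := by
    funext i
    rw [Pi.smul_apply, smul_eq_mul, hθ, add_assoc]
  rw [hshift, momentFunctional_smul, C_mul', map_smul, smul_eq_mul]
  linear_combination η * h

end Derivative

theorem toda_flow_of_orthogonal {μ : ℝ → ℕ → ℝ} {μ' : ℕ → ℝ} {η : ℝ}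
    (hμ : ∀ i, HasDerivAt (fun x => μ x i) (μ' i) η) (hθ : ∀ i, η * μ' i = μ η (i + 1))
    (hpos : ∀ r ≠ 0, momentFunctional (μ η) (r * r) ≠ 0)
    {P : ℝ → ℕ → ℝ[X]} {β γ : ℝ} {n : ℕ} {D : ℝ[X]}
    (hmonic : ∀ᶠ x in 𝓝 η, (P x (n + 1)).Monic ∧ (P x (n + 1)).natDegree = n + 1)
    (hdeg : (P η n).natDegree ≤ n)
    (horth : ∀ᶠ x in 𝓝 η, ∀ N, ∀ m < N, momentFunctional (μ x) (X ^ m * P x N) = 0)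
    (hrec : X * P η (n + 1) = P η (n + 2) + C β * P η (n + 1) + C γ * P η n)
    (hD : ∀ i, HasDerivAt (fun x => (P x (n + 1)).coeff i) (D.coeff i) η) :
    C η * D = -(C γ * P η n) := by
  have horthη := horth.self_of_nhds
  have hflow : ∀ m < n + 1, momentFunctional (μ η) (X ^ m * (C η * D))
      = -momentFunctional (μ η) (X ^ (m + 1) * P η (n + 1)) := fun m hm =>
    momentFunctional_X_pow_mul_C_mul_eq_neg (p := fun x => P x (n + 1)) hμ hθ hD
      (hmonic.mono fun _ h => h.2.le) (horth.mono fun x hx => hx (n + 1) m hm)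
  have hγ : momentFunctional (μ η) (X ^ (n + 1) * P η (n + 1))
      = γ * momentFunctional (μ η) (X ^ n * P η n) :=
    map_X_pow_succ_mul_of_recurrence _ hrec (horthη _ n (by omega)) (horthη _ n (by omega))
  have hdegD := natDegree_le_of_hasDerivAt_coeff_of_monic hD hmonic
  rw [← add_eq_zero_iff_eq_neg]
  refine eq_zero_of_map_X_pow_mul_eq_zero _ hpos (n := n + 1) ?_ fun m hm => ?_
  · refine Nat.lt_succ_of_le (natDegree_add_le_of_degree_le ?_ ?_)
    · exact (natDegree_C_mul_le _ _).trans hdegD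
    · exact (natDegree_C_mul_le _ _).trans hdeg
  · rw [mul_add, map_add, hflow m hm, mul_left_comm, C_mul', map_smul, smul_eq_mul]
    rcases Nat.lt_succ_iff_lt_or_eq.mp hm with hm | rfl
    · rw [horthη _ (m + 1) (by omega), horthη _ m hm]
      ring
    · rw [hγ]
      ring

theorem tsum_eval_mul_pow_mul_pow_eq {v : ℕ → ℝ} {η : ℝ}
    (hconv : ∀ n, Summable fun k : ℕ => (k : ℝ) ^ n * v k * η ^ k) (q : ℝ[X]) (m : ℕ) :
    ∑' k : ℕ, q.eval (k : ℝ) * (k : ℝ) ^ m * v k * η ^ k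
      = momentFunctional (moment fun k => v k * η ^ k) (X ^ m * q) := by
  rw [← tsum_eval_mul (fun n => by simpa only [mul_assoc] using hconv n)]
  simp only [eval_mul, eval_pow, eval_X]
  exact tsum_congr fun k => by ring

theorem toda_flow_polynomials_general (v : ℕ → ℝ) (hv : ∀ k, 0 < v k)
    (hconv : ∀ n : ℕ, ∀ η : ℝ, 0 < η → Summable (fun k : ℕ => (k : ℝ) ^ n * v k * η ^ k))
    (P : ℝ → ℕ → Polynomial ℝ) (β γ : ℕ → ℝ → ℝ)
    (hmonic : ∀ η : ℝ, 0 < η → ∀ n, (P η n).Monic ∧ (P η n).natDegree = n)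
    (horth : ∀ η : ℝ, 0 < η → ∀ n, ∀ m < n,
      ∑' k : ℕ, (P η n).eval (k : ℝ) * (k : ℝ) ^ m * v k * η ^ k = 0)
    (hrec : ∀ η : ℝ, 0 < η → ∀ n : ℕ, 1 ≤ n →
      X * P η n = P η (n + 1) + C (β n η) * P η n + C (γ n η) * P η (n - 1))
    (hcoeffdiff : ∀ n i : ℕ, DifferentiableOn ℝ (fun η : ℝ => (P η n).coeff i) (Set.Ioi 0))
    (p1 : ℕ → ℝ → ℝ)
    (hp1 : ∀ n η, p1 n η = if n = 0 then 0 else (P η n).coeff (n - 1)) :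
    ∀ n : ℕ, 1 ≤ n → ∀ η : ℝ, 0 < η →
      (∀ i : ℕ, η * deriv (fun x : ℝ => (P x n).coeff i) η = -γ n η * (P η (n - 1)).coeff i)
      ∧ η * deriv (p1 n) η = -γ n η := by
  intro n hn η hη
  obtain ⟨n, rfl⟩ : ∃ m, n = m + 1 := ⟨n - 1, by omega⟩
  simp only [Nat.add_sub_cancel]
  have hnear : ∀ᶠ x in 𝓝 η, 0 < x := Ioi_mem_nhds hη
  have hweight : ∀ x, 0 < x → ∀ n, Summable fun k : ℕ => (k : ℝ) ^ n * (v k * x ^ k) :=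
    fun x hx n => by simpa only [mul_assoc] using hconv n x hx
  obtain ⟨D, hD⟩ := exists_hasDerivAt_coeff (p := fun x => P x (n + 1))
    (fun i => (hcoeffdiff (n + 1) i).differentiableAt (Ioi_mem_nhds hη))
    (hnear.mono fun x hx => (hmonic x hx (n + 1)).2.le)
  have hflow := toda_flow_of_orthogonal (μ := fun x => moment fun k => v k * x ^ k)
    (fun i => hasDerivAt_moment_mul_pow (fun k => (hv k).le) (hweight (η + 1) (by linarith))
      ⟨hη, lt_add_one η⟩ i) (fun i => mul_div_cancel₀ _ hη.ne')
    (fun r hr => (momentFunctional_moment_mul_self_pos (hweight η hη)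
      (fun k => mul_pos (hv k) (pow_pos hη k)) hr).ne')
    (hnear.mono fun x hx => hmonic x hx (n + 1)) (hmonic η hη n).2.le
    (hnear.mono fun x hx N m hm => by
      rw [← tsum_eval_mul_pow_mul_pow_eq (fun n => hconv n x hx), horth x hx N m hm])
    (by simpa using hrec η hη (n + 1) le_add_self) hD
  have hcoeff : ∀ i,
      η * deriv (fun x => (P x (n + 1)).coeff i) η = -γ (n + 1) η * (P η n).coeff i :=
    fun i => by simpa [(hD i).deriv] using congrArg (coeff · i) hflow
  have hlead : (P η n).coeff n = 1 := by
    simpa only [(hmonic η hη n).2] using (hmonic η hη n).1.coeff_natDegree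
  have hp1_eq : p1 (n + 1) = fun x => (P x (n + 1)).coeff n := funext fun x => by simp [hp1]
  exact ⟨hcoeff, by rw [hp1_eq, hcoeff, hlead, mul_one]⟩

/-- For a weight w(k) = v(k)η^k on ℕ satisfying the Pearson equation
θ(k+1)w(k+1) = ηκ(k)w(k), with convergent moments smoothly depending on η and
nonvanishing Hankel determinants, the monic orthogonal polynomials satisfy
ϑ_η P_n = −γ_n P_{n-1} for n ≥ 1; in particular ϑ_η p¹_n = −γ_n. -/
theorem toda_flow_polynomials (v : ℕ → ℝ) (hv : ∀ k, 0 < v k)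
    (θ κ : Polynomial ℝ)
    (hPearson : ∀ η : ℝ, 0 < η → ∀ k : ℕ,
      θ.eval ((k : ℝ) + 1) * (v (k + 1) * η ^ (k + 1))
        = η * κ.eval (k : ℝ) * (v k * η ^ k))
    (hconv : ∀ n : ℕ, ∀ η : ℝ, 0 < η → Summable (fun k : ℕ => (k : ℝ) ^ n * v k * η ^ k))
    (hsmooth : ∀ n : ℕ, DifferentiableOn ℝ (fun η : ℝ => ∑' k : ℕ, (k : ℝ) ^ n * v k * η ^ k)
      (Set.Ioi 0))
    (hΔ : ∀ η : ℝ, 0 < η → ∀ N : ℕ,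
      (Matrix.of fun i j : Fin N =>
        ∑' k : ℕ, (k : ℝ) ^ ((i : ℕ) + (j : ℕ)) * v k * η ^ k).det ≠ 0)
    (P : ℝ → ℕ → Polynomial ℝ) (β γ : ℕ → ℝ → ℝ)
    (hmonic : ∀ η : ℝ, 0 < η → ∀ n, (P η n).Monic ∧ (P η n).natDegree = n)
    (horth : ∀ η : ℝ, 0 < η → ∀ n, ∀ m < n,
      ∑' k : ℕ, (P η n).eval (k : ℝ) * (k : ℝ) ^ m * v k * η ^ k = 0)
    (hrec : ∀ η : ℝ, 0 < η → ∀ n : ℕ, 1 ≤ n →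
      X * P η n = P η (n + 1) + C (β n η) * P η n + C (γ n η) * P η (n - 1))
    (hcoeffdiff : ∀ n i : ℕ, DifferentiableOn ℝ (fun η : ℝ => (P η n).coeff i) (Set.Ioi 0))
    (p1 : ℕ → ℝ → ℝ)
    (hp1 : ∀ n η, p1 n η = if n = 0 then 0 else (P η n).coeff (n - 1)) :
    ∀ n : ℕ, 1 ≤ n → ∀ η : ℝ, 0 < η →
      (∀ i : ℕ, η * deriv (fun x : ℝ => (P x n).coeff i) η = -γ n η * (P η (n - 1)).coeff i)
      ∧ η * deriv (p1 n) η = -γ n η :=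
  toda_flow_polynomials_general v hv hconv P β γ hmonic horth hrec hcoeffdiff p1 hp1
end
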